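/- In the neighbourhood Morse geometry of type (λ, n−λ), for any index 0 ≤ λ ≤ n and any point q ∈ N: if there exists y ∈ ↓I⁺(q) with y ∉ I⁻(q), then there exists z ∈ ↓I⁺(q) with z not in the closure (taken in N) of I⁻(q). Dually, if there exists y ∈ ↑I⁻(q) with y ∉ I⁺(q), then there exists z ∈ ↑I⁻(q) with z not in the closure in N of I⁺(q). -/

import Mathlib

/-!
Both implications follow from three properties of the chronology relation: it is transitive,
each `I⁺(p)` is open, and `p` lies in the closure of `I⁺(p)` (dually for `I⁻`). If
`y ∈ ↓I⁺(q)` and `y ≪̸ q`, the open set `↓I⁺(q)` meets the open set `I⁺(y)` in some `z`; were `z`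
in the closure of `I⁻(q)`, a point `w ∈ I⁺(y) ∩ I⁻(q)` would give `y ≪ w ≪ q`.

`I⁺(p)` is open because translating a timelike curve by a small affine family of vectors keeps it
timelike; `p` lies in its closure because `p + s ∇f(p) ∈ I⁺(p)` for small `s > 0`. For transitivity, two timelike curves are
concatenated by running both at once near the junction: there the velocity is a positive
combination of two future timelike vectors at nearly the same point, which stays timelike
because the future cone is convex and open.
-/

noncomputable section

open Set

/-- Points of `ℝⁿ = ℝ^λ × ℝ^{n−λ}`. -/
abbrev Pt (n lam : ℕ) := EuclideanSpace ℝ (Fin lam) × EuclideanSpace ℝ (Fin (n - lam))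

/-- The Euclidean inner product on `ℝⁿ = ℝ^λ × ℝ^{n−λ}`. -/
def iprod {n lam : ℕ} (v w : Pt n lam) : ℝ :=
  (inner ℝ v.1 w.1 : ℝ) + (inner ℝ v.2 w.2 : ℝ)

/-- The punctured ball `N = {p : 0 < |p| < ε}` (Euclidean norm). -/
def NN (n lam : ℕ) (ε : ℝ) : Set (Pt n lam) :=
  {p | 0 < ‖p.1‖ ^ 2 + ‖p.2‖ ^ 2 ∧ ‖p.1‖ ^ 2 + ‖p.2‖ ^ 2 < ε ^ 2}

/-- The Euclidean gradient of the Morse function `f(x,y) = −|x|² + |y|²`. -/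
def gradf {n lam : ℕ} (p : Pt n lam) : Pt n lam :=
  ((-2 : ℝ) • p.1, (2 : ℝ) • p.2)

/-- The Morse metric with flat auxiliary metric (as a quadratic form):
`g_p(w,w) = |∇f(p)|²⟨w,w⟩ − ζ⟨∇f(p),w⟩²`. -/
def gN (ζ : ℝ) {n lam : ℕ} (p w : Pt n lam) : ℝ :=
  iprod (gradf p) (gradf p) * iprod w w - ζ * iprod (gradf p) w ^ 2

def m1 (ζ : ℝ) : ℝ := (Real.sqrt ζ - 1) / Real.sqrt (ζ - 1)
def m2 (ζ : ℝ) : ℝ := (Real.sqrt ζ + 1) / Real.sqrt (ζ - 1)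

/-- A future-directed timelike curve: a C¹ curve in `N` with everywhere timelike,
future-pointing (`⟨∇f(γ), γ'⟩ > 0`) tangent. -/
def Timelike (ζ ε : ℝ) {n lam : ℕ} (γ γ' : ℝ → Pt n lam) : Prop :=
  (∀ t ∈ Icc (0 : ℝ) 1, HasDerivAt γ (γ' t) t) ∧
  ContinuousOn γ' (Icc (0 : ℝ) 1) ∧
  (∀ t ∈ Icc (0 : ℝ) 1, γ t ∈ NN n lam ε) ∧
  (∀ t ∈ Icc (0 : ℝ) 1, gN ζ (γ t) (γ' t) < 0) ∧
  (∀ t ∈ Icc (0 : ℝ) 1, 0 < iprod (gradf (γ t)) (γ' t))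

/-- The chronology relation `q ≪ p`. -/
def chron (ζ ε : ℝ) {n lam : ℕ} (q p : Pt n lam) : Prop :=
  ∃ γ γ', Timelike ζ ε γ γ' ∧ γ 0 = q ∧ γ 1 = p

def Iplus (ζ ε : ℝ) {n lam : ℕ} (q : Pt n lam) : Set (Pt n lam) :=
  {p ∈ NN n lam ε | chron ζ ε q p}

def Iminus (ζ ε : ℝ) {n lam : ℕ} (q : Pt n lam) : Set (Pt n lam) :=
  {p ∈ NN n lam ε | chron ζ ε p q}

/-- The common past `↓U` (interior in the open set `N` of the set of points
chronologically preceding every point of `U`). -/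
def downSet (ζ ε : ℝ) {n lam : ℕ} (U : Set (Pt n lam)) : Set (Pt n lam) :=
  interior {p ∈ NN n lam ε | ∀ u ∈ U, chron ζ ε p u}

/-- The common future `↑U`. -/
def upSet (ζ ε : ℝ) {n lam : ℕ} (U : Set (Pt n lam)) : Set (Pt n lam) :=
  interior {p ∈ NN n lam ε | ∀ u ∈ U, chron ζ ε u p}

namespace MorseChronology

open Metric Filter Topology

lemma exists_mem_notMem_closure {X : Type*} [TopologicalSpace X] {r : X → X → Prop}
    (htrans : ∀ {a b c}, r a b → r b c → r a c) {y q : X} {D S : Set X} (hD : IsOpen D)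
    (hyD : y ∈ D) (hopen : IsOpen {w | r y w}) (hy : y ∈ closure {w | r y w})
    (hS : ∀ w ∈ S, r w q) (hyq : ¬ r y q) : ∃ z ∈ D, z ∉ closure S := by
  obtain ⟨z, hzD, hyz⟩ := mem_closure_iff.1 hy D hD hyD
  refine ⟨z, hzD, fun hz => ?_⟩
  obtain ⟨w, hyw, hwS⟩ := mem_closure_iff.1 hz _ hopen hyz
  exact hyq (htrans hyw (hS w hwS))

variable {n lam : ℕ} {ζ ε : ℝ}

lemma iprod_eq_inner (v w : Pt n lam) :
    iprod v w = inner ℝ (WithLp.toLp 2 v) (WithLp.toLp 2 w) := rfl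

lemma iprod_self (v : Pt n lam) : iprod v v = ‖WithLp.toLp 2 v‖ ^ 2 := by
  rw [iprod_eq_inner, real_inner_self_eq_norm_sq]

lemma continuous_iprod : Continuous fun x : Pt n lam × Pt n lam => iprod x.1 x.2 := by
  unfold iprod; fun_prop

lemma isOpen_NN : IsOpen (NN n lam ε) :=
  isOpen_Ioo.preimage (by fun_prop : Continuous fun p : Pt n lam => ‖p.1‖ ^ 2 + ‖p.2‖ ^ 2)

def timelikeBundle (ζ ε : ℝ) (n lam : ℕ) : Set (Pt n lam × Pt n lam) :=
  {x | x.1 ∈ NN n lam ε ∧ gN ζ x.1 x.2 < 0 ∧ 0 < iprod (gradf x.1) x.2}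

lemma isOpen_timelikeBundle : IsOpen (timelikeBundle ζ ε n lam) := by
  have hgrad : Continuous (gradf : Pt n lam → Pt n lam) := by unfold gradf; fun_prop
  have hpair : Continuous fun x : Pt n lam × Pt n lam => iprod (gradf x.1) x.2 :=
    continuous_iprod.comp ((hgrad.comp continuous_fst).prodMk continuous_snd)
  have hgN : Continuous fun x : Pt n lam × Pt n lam => gN ζ x.1 x.2 := by
    unfold gN
    have hself := continuous_iprod (n := n) (lam := lam)
    exact ((hself.comp ((hgrad.comp continuous_fst).prodMk (hgrad.comp continuous_fst))).mul
      (hself.comp (continuous_snd.prodMk continuous_snd))).sub (continuous_const.mul (hpair.pow 2))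
  exact (isOpen_NN.preimage continuous_fst).inter
    ((isOpen_lt hgN continuous_const).inter (isOpen_lt continuous_const hpair))

lemma mem_timelikeBundle_iff (hζ : 0 < ζ) {p v : Pt n lam} :
    (p, v) ∈ timelikeBundle ζ ε n lam ↔ p ∈ NN n lam ε ∧
      ‖WithLp.toLp 2 (gradf p)‖ * ‖WithLp.toLp 2 v‖ < √ζ * iprod (gradf p) v := by
  have hs : √ζ ^ 2 = ζ := Real.sq_sqrt hζ.le
  have hprod : 0 ≤ ‖WithLp.toLp 2 (gradf p)‖ * ‖WithLp.toLp 2 v‖ := by positivity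
  simp only [timelikeBundle, gN, iprod_self, Set.mem_ofPred_eq]
  refine and_congr_right fun _ => ⟨fun ⟨hg, hpos⟩ => ?_, fun h => ?_⟩
  · have hsc : 0 < √ζ * iprod (gradf p) v := mul_pos (Real.sqrt_pos.2 hζ) hpos
    by_contra! h
    nlinarith [mul_le_mul h h hsc.le hprod]
  · have hpos : 0 < iprod (gradf p) v := by
      by_contra! h'
      nlinarith [Real.sqrt_nonneg ζ]
    exact ⟨by nlinarith, hpos⟩

lemma smul_mem_timelikeBundle {c : ℝ} (hc : 0 < c) {p v : Pt n lam}
    (h : (p, v) ∈ timelikeBundle ζ ε n lam) : (p, c • v) ∈ timelikeBundle ζ ε n lam := by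
  obtain ⟨hp, hg, hpos⟩ := h
  have hgN : gN ζ p (c • v) = c ^ 2 * gN ζ p v := by
    simp only [gN, iprod_eq_inner, WithLp.toLp_smul, real_inner_smul_left, real_inner_smul_right]
    ring
  refine ⟨hp, ?_, ?_⟩
  · rw [hgN]; exact mul_neg_of_pos_of_neg (by positivity) hg
  · rw [iprod_eq_inner, WithLp.toLp_smul, real_inner_smul_right]
    exact mul_pos hc hpos

lemma convex_timelikeBundle_fiber (hζ : 0 < ζ) (p : Pt n lam) :
    Convex ℝ {v | (p, v) ∈ timelikeBundle ζ ε n lam} := by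
  refine convex_iff_forall_pos.2 fun v hv w hw a b ha hb hab => ?_
  simp only [Set.mem_ofPred_eq, mem_timelikeBundle_iff hζ] at hv hw ⊢
  obtain ⟨hp, hv⟩ := hv
  obtain ⟨-, hw⟩ := hw
  refine ⟨hp, ?_⟩
  set g := ‖WithLp.toLp 2 (gradf p)‖
  have htri : ‖WithLp.toLp 2 (a • v + b • w)‖ ≤ a * ‖WithLp.toLp 2 v‖ + b * ‖WithLp.toLp 2 w‖ := by
    simpa [norm_smul, abs_of_pos ha, abs_of_pos hb] using
      norm_add_le (a • WithLp.toLp 2 v) (b • WithLp.toLp 2 w)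
  have hlin : iprod (gradf p) (a • v + b • w) = a * iprod (gradf p) v + b * iprod (gradf p) w := by
    simp only [iprod_eq_inner, WithLp.toLp_add, WithLp.toLp_smul, inner_add_right,
      real_inner_smul_right]
  calc g * ‖WithLp.toLp 2 (a • v + b • w)‖
      ≤ a * (g * ‖WithLp.toLp 2 v‖) + b * (g * ‖WithLp.toLp 2 w‖) := by
        nlinarith [norm_nonneg (WithLp.toLp 2 (gradf p))]
    _ < a * (√ζ * iprod (gradf p) v) + b * (√ζ * iprod (gradf p) w) := by
        gcongr
    _ = √ζ * iprod (gradf p) (a • v + b • w) := by rw [hlin]; ring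

lemma gradf_mem_timelikeBundle (hζ : 1 < ζ) {p : Pt n lam} (hp : p ∈ NN n lam ε) :
    (p, gradf p) ∈ timelikeBundle ζ ε n lam := by
  have hQ : 0 < iprod (gradf p) (gradf p) := by
    simp only [iprod, gradf, real_inner_self_eq_norm_sq, norm_smul]
    norm_num
    linarith [hp.1]
  refine ⟨hp, ?_, hQ⟩
  unfold gN
  nlinarith [mul_pos hQ hQ]

lemma exists_blend_mem_timelikeBundle (hζ : 0 < ζ) {p v w : Pt n lam}
    (hv : (p, v) ∈ timelikeBundle ζ ε n lam) (hw : (p, w) ∈ timelikeBundle ζ ε n lam) :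
    ∃ δ > 0, ∀ p' v' w' : Pt n lam, ∀ a b : ℝ, dist p' p < δ → dist v' v < δ →
      dist w' w < δ → 0 ≤ a → 0 ≤ b → 0 < a + b →
      (p', a • v' + b • w') ∈ timelikeBundle ζ ε n lam := by
  have hK : IsCompact ({p} ×ˢ segment ℝ v w) := by
    refine isCompact_singleton.prod ?_
    rw [← convexHull_pair]
    exact (Set.toFinite _).isCompact_convexHull ℝ
  have hKB : {p} ×ˢ segment ℝ v w ⊆ timelikeBundle ζ ε n lam := by
    rintro ⟨q, u⟩ ⟨rfl, hu⟩
    exact (convex_timelikeBundle_fiber hζ q).segment_subset hv hw hu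
  obtain ⟨δ, hδ, hthick⟩ := hK.exists_thickening_subset_open isOpen_timelikeBundle hKB
  refine ⟨δ, hδ, fun p' v' w' a b hp hv' hw' ha hb hab => ?_⟩
  set s := a + b
  have hsum : a / s + b / s = 1 := by rw [← add_div, div_self hab.ne']
  have hnormalized : (p', (a / s) • v' + (b / s) • w') ∈ timelikeBundle ζ ε n lam := by
    refine hthick (mem_thickening_iff.2 ⟨(p, (a / s) • v + (b / s) • w),
      ⟨rfl, a / s, b / s, by positivity, by positivity, hsum, rfl⟩, ?_⟩)
    rw [Prod.dist_eq, max_lt_iff]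
    refine ⟨hp, ?_⟩
    set d := max (dist v' v) (dist w' w)
    calc dist ((a / s) • v' + (b / s) • w') ((a / s) • v + (b / s) • w)
        ≤ (a / s) * dist v' v + (b / s) * dist w' w := by
          refine (dist_add_add_le _ _ _ _).trans_eq ?_
          rw [dist_smul₀, dist_smul₀, Real.norm_of_nonneg (by positivity),
            Real.norm_of_nonneg (by positivity)]
      _ ≤ (a / s) * d + (b / s) * d := by gcongr <;> simp [d]
      _ < δ := by rw [← add_mul, hsum, one_mul]; exact max_lt hv' hw'
  have hscale : a • v' + b • w' = s • ((a / s) • v' + (b / s) • w') := by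
    rw [smul_add, smul_smul, smul_smul, mul_div_cancel₀ _ hab.ne', mul_div_cancel₀ _ hab.ne']
  rw [hscale]
  exact smul_mem_timelikeBundle hab hnormalized

lemma timelike_iff {γ γ' : ℝ → Pt n lam} :
    Timelike ζ ε γ γ' ↔ (∀ t ∈ Icc (0 : ℝ) 1, HasDerivAt γ (γ' t) t) ∧
      ContinuousOn γ' (Icc 0 1) ∧ ∀ t ∈ Icc (0 : ℝ) 1, (γ t, γ' t) ∈ timelikeBundle ζ ε n lam := by
  simp only [Timelike, timelikeBundle, Set.mem_ofPred_eq, ← forall_and]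

lemma Timelike.continuousOn {γ γ' : ℝ → Pt n lam} (h : Timelike ζ ε γ γ') :
    ContinuousOn (fun t => (γ t, γ' t)) (Icc 0 1) :=
  ContinuousOn.prodMk (fun t ht => (h.1 t ht).continuousAt.continuousWithinAt) h.2.1

lemma Timelike.exists_add_affine_smul {γ γ' : ℝ → Pt n lam} (h : Timelike ζ ε γ γ')
    (a b : ℝ) : ∃ η > 0, ∀ d : Pt n lam, ‖d‖ < η →
      Timelike ζ ε (fun t => γ t + (a + b * t) • d) (fun t => γ' t + b • d) := by
  obtain ⟨hder, hcont, hB⟩ := timelike_iff.1 h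
  obtain ⟨δ, hδ, hthick⟩ := (isCompact_Icc.image_of_continuousOn (Timelike.continuousOn h))
    |>.exists_thickening_subset_open isOpen_timelikeBundle (image_subset_iff.2 hB)
  refine ⟨δ / (|a| + |b| + 1), by positivity, fun d hd => timelike_iff.2 ⟨fun t _ => ?_,
    hcont.add continuousOn_const, fun t ht => hthick (mem_thickening_iff.2
      ⟨_, mem_image_of_mem _ ht, ?_⟩)⟩⟩
  · have haff : HasDerivAt (fun t : ℝ => a + b * t) b t := by
      simpa using ((hasDerivAt_id t).const_mul b).const_add a
    exact (hder t ‹_›).add (haff.smul_const d)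
  · have hd' : (|a| + |b|) * ‖d‖ < δ := by
      rw [lt_div_iff₀ (by positivity)] at hd
      nlinarith [norm_nonneg d]
    have hcoef : |a + b * t| ≤ |a| + |b| := by
      refine (abs_add_le _ _).trans (add_le_add_right ?_ _)
      rw [abs_mul, abs_of_nonneg ht.1]
      exact mul_le_of_le_one_right (abs_nonneg b) ht.2
    rw [Prod.dist_eq, max_lt_iff]
    simp only [dist_eq_norm, add_sub_cancel_left, norm_smul, Real.norm_eq_abs]
    constructor <;> nlinarith [norm_nonneg d, abs_nonneg a]

lemma isOpen_setOf_chron (p : Pt n lam) : IsOpen {w | chron ζ ε p w} := by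
  refine Metric.isOpen_iff.2 fun w ⟨γ, γ', h, h0, h1⟩ => ?_
  obtain ⟨η, hη, hpert⟩ := Timelike.exists_add_affine_smul h 0 1
  refine ⟨η, hη, fun w' hw' => ⟨_, _, hpert (w' - w) (by rwa [← dist_eq_norm]), ?_, ?_⟩⟩
  · simp [h0]
  · simp [h1]

lemma isOpen_setOf_chron_left (p : Pt n lam) : IsOpen {w | chron ζ ε w p} := by
  refine Metric.isOpen_iff.2 fun w ⟨γ, γ', h, h0, h1⟩ => ?_
  obtain ⟨η, hη, hpert⟩ := Timelike.exists_add_affine_smul h 1 (-1)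
  refine ⟨η, hη, fun w' hw' => ⟨_, _, hpert (w' - w) (by rwa [← dist_eq_norm]), ?_, ?_⟩⟩
  · simp [h0]
  · simp [h1]

lemma chron_add_smul {p u : Pt n lam} {a b : ℝ} (hab : a < b)
    (h : ∀ σ ∈ Icc a b, (p + σ • u, u) ∈ timelikeBundle ζ ε n lam) :
    chron ζ ε (p + a • u) (p + b • u) := by
  have hσ : ∀ t ∈ Icc (0 : ℝ) 1, a + t * (b - a) ∈ Icc a b := fun t ht =>
    ⟨by nlinarith [ht.1], by nlinarith [ht.2]⟩
  refine ⟨fun t => p + (a + t * (b - a)) • u, fun _ => (b - a) • u,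
    timelike_iff.2 ⟨fun t _ => ?_, continuousOn_const, fun t ht =>
      smul_mem_timelikeBundle (sub_pos.2 hab) (h _ (hσ t ht))⟩, by simp, by simp⟩
  have hlin : HasDerivAt (fun t : ℝ => a + t * (b - a)) (b - a) t := by
    simpa using ((hasDerivAt_id t).mul_const (b - a)).const_add a
  exact (hlin.smul_const u).const_add p

lemma exists_chron_along_gradf (hζ : 1 < ζ) {p : Pt n lam} (hp : p ∈ NN n lam ε) :
    ∃ δ > 0, ∀ a b : ℝ, -δ < a → a < b → b < δ →
      chron ζ ε (p + a • gradf p) (p + b • gradf p) := by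
  have hcont : Continuous fun σ : ℝ => (p + σ • gradf p, gradf p) := by fun_prop
  have hnhds : ∀ᶠ σ in 𝓝 (0 : ℝ), (p + σ • gradf p, gradf p) ∈ timelikeBundle ζ ε n lam :=
    hcont.continuousAt.preimage_mem_nhds
      (isOpen_timelikeBundle.mem_nhds (by simpa using gradf_mem_timelikeBundle hζ hp))
  obtain ⟨δ, hδ, hball⟩ := Metric.eventually_nhds_iff.1 hnhds
  refine ⟨δ, hδ, fun a b ha hab hb => chron_add_smul hab fun σ hσ => hball ?_⟩
  rw [Real.dist_eq, sub_zero, abs_lt]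
  exact ⟨ha.trans_le hσ.1, hσ.2.trans_lt hb⟩

lemma mem_closure_setOf_chron (hζ : 1 < ζ) {p : Pt n lam} (hp : p ∈ NN n lam ε) :
    p ∈ closure {w | chron ζ ε p w} := by
  obtain ⟨δ, hδ, hchron⟩ := exists_chron_along_gradf hζ hp
  have hlim : Tendsto (fun s : ℝ => p + s • gradf p) (𝓝[>] 0) (𝓝 p) := by
    simpa using ((by fun_prop : Continuous fun s : ℝ => p + s • gradf p).tendsto 0).mono_left
      nhdsWithin_le_nhds
  refine mem_closure_of_tendsto hlim (mem_of_superset (Ioo_mem_nhdsGT hδ) fun s hs => ?_)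
  simpa using hchron 0 s (by linarith) hs.1 hs.2

lemma mem_closure_setOf_chron_left (hζ : 1 < ζ) {p : Pt n lam} (hp : p ∈ NN n lam ε) :
    p ∈ closure {w | chron ζ ε w p} := by
  obtain ⟨δ, hδ, hchron⟩ := exists_chron_along_gradf hζ hp
  have hlim : Tendsto (fun s : ℝ => p + (-s) • gradf p) (𝓝[>] 0) (𝓝 p) := by
    simpa using ((by fun_prop : Continuous fun s : ℝ => p + (-s) • gradf p).tendsto 0).mono_left
      nhdsWithin_le_nhds
  refine mem_closure_of_tendsto hlim (mem_of_superset (Ioo_mem_nhdsGT hδ) fun s hs => ?_)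
  simpa using hchron (-s) 0 (by linarith [hs.2]) (by linarith [hs.1]) hδ

def posPartSq (s : ℝ) : ℝ := max s 0 ^ 2

lemma hasDerivAt_posPartSq (s : ℝ) : HasDerivAt posPartSq (2 * max s 0) s := by
  have hsq : ∀ x, HasDerivAt (fun x : ℝ => x ^ 2) (2 * x) x := fun x => by
    simpa using hasDerivAt_pow 2 x
  rcases lt_trichotomy s 0 with hs | rfl | hs
  · rw [max_eq_right hs.le, mul_zero]
    refine (hasDerivAt_const s 0).congr_of_eventuallyEq ?_
    filter_upwards [eventually_lt_nhds hs] with x hx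
    simp [posPartSq, max_eq_right hx.le]
  · rw [max_self, mul_zero, ← hasDerivWithinAt_univ, ← Iic_union_Ici (a := (0 : ℝ))]
    refine HasDerivWithinAt.union ?_ ?_
    · refine (hasDerivWithinAt_const (0 : ℝ) (Iic 0) (0 : ℝ)).congr (fun x hx => ?_)
        (by simp [posPartSq])
      simp [posPartSq, max_eq_right (mem_Iic.1 hx)]
    · have h := (hsq 0).hasDerivWithinAt (s := Ici 0)
      rw [mul_zero] at h
      refine h.congr (fun x hx => ?_) (by simp [posPartSq])
      simp [posPartSq, max_eq_left (mem_Ici.1 hx)]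
  · rw [max_eq_left hs.le]
    refine (hsq s).congr_of_eventuallyEq ?_
    filter_upwards [eventually_gt_nhds hs] with x hx
    simp [posPartSq, max_eq_left hx.le]

/-- Unit-time motion from `0` to `1`: speed `2 / (1 + τ)` until time `1/2`, then constant
deceleration to rest at time `1/2 + τ`. -/
def brake (τ t : ℝ) : ℝ :=
  2 / (1 + τ) * (t - (posPartSq (t - 1 / 2) - posPartSq (t - 1 / 2 - τ)) / (2 * τ))

def brakeSpeed (τ t : ℝ) : ℝ :=
  2 / (1 + τ) * (1 - (max (t - 1 / 2) 0 - max (t - 1 / 2 - τ) 0) / τ)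

variable {τ : ℝ}

lemma hasDerivAt_brake (τ t : ℝ) : HasDerivAt (brake τ) (brakeSpeed τ t) t := by
  have h₁ := (hasDerivAt_posPartSq (t - 1 / 2)).comp t ((hasDerivAt_id t).sub_const (1 / 2))
  have h₂ := (hasDerivAt_posPartSq (t - 1 / 2 - τ)).comp t
    (((hasDerivAt_id t).sub_const (1 / 2)).sub_const τ)
  refine (((hasDerivAt_id t).sub ((h₁.sub h₂).div_const (2 * τ))).const_mul
    (2 / (1 + τ))).congr_deriv ?_
  simp only [brakeSpeed, mul_one]
  congr 2
  rw [← mul_sub, mul_div_mul_left _ _ two_ne_zero]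

lemma continuous_brakeSpeed (τ : ℝ) : Continuous (brakeSpeed τ) := by
  unfold brakeSpeed; fun_prop

lemma brakeSpeed_of_le_half {t : ℝ} (hτ : 0 ≤ τ) (ht : t ≤ 1 / 2) :
    brakeSpeed τ t = 2 / (1 + τ) := by
  rw [brakeSpeed, max_eq_right (by linarith), max_eq_right (by linarith)]
  simp

lemma brakeSpeed_of_le {t : ℝ} (hτ : 0 < τ) (ht : 1 / 2 + τ ≤ t) : brakeSpeed τ t = 0 := by
  rw [brakeSpeed, max_eq_left (by linarith), max_eq_left (by linarith)]
  field_simp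
  ring

lemma brakeSpeed_nonneg (hτ : 0 < τ) (t : ℝ) : 0 ≤ brakeSpeed τ t := by
  have hle : max (t - 1 / 2) 0 - max (t - 1 / 2 - τ) 0 ≤ τ := by
    rw [sub_le_iff_le_add]
    exact max_le (by linarith [le_max_left (t - 1 / 2 - τ) 0])
      (by linarith [le_max_right (t - 1 / 2 - τ) 0])
  unfold brakeSpeed
  exact mul_nonneg (by positivity) (sub_nonneg.2 ((div_le_one hτ).2 hle))

lemma brake_of_le_half {t : ℝ} (hτ : 0 ≤ τ) (ht : t ≤ 1 / 2) : brake τ t = 2 / (1 + τ) * t := by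
  rw [brake, posPartSq, posPartSq, max_eq_right (by linarith), max_eq_right (by linarith)]
  simp

lemma brake_of_le {t : ℝ} (hτ : 0 < τ) (ht : 1 / 2 + τ ≤ t) : brake τ t = 1 := by
  rw [brake, posPartSq, posPartSq, max_eq_left (by linarith), max_eq_left (by linarith)]
  field_simp
  ring

lemma monotone_brake (hτ : 0 < τ) : Monotone (brake τ) :=
  monotone_of_hasDerivAt_nonneg (hasDerivAt_brake τ) (brakeSpeed_nonneg hτ)

lemma brake_mem_Icc (hτ : 0 < τ) (hτ' : τ ≤ 1 / 2) {t : ℝ} (ht : t ∈ Icc (0 : ℝ) 1) :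
    brake τ t ∈ Icc (0 : ℝ) 1 := by
  constructor
  · simpa [brake_of_le_half hτ.le] using monotone_brake hτ ht.1
  · simpa [brake_of_le hτ (by linarith : 1 / 2 + τ ≤ 1)] using monotone_brake hτ ht.2

lemma one_sub_brake_le (hτ : 0 < τ) {t : ℝ} (ht : 1 / 2 - τ ≤ t) : 1 - brake τ t ≤ 3 * τ := by
  have hmono := monotone_brake hτ ht
  rw [brake_of_le_half hτ.le (by linarith)] at hmono
  have hhalf : 2 / (1 + τ) * (1 / 2 - τ) = 1 - 3 * τ / (1 + τ) := by field_simp; ring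
  have hdiv : 3 * τ / (1 + τ) ≤ 3 * τ := div_le_self (by positivity) (by linarith)
  linarith

/-- `γ₁` followed by `γ₂`, both reparametrised by `brake`; while both parameters move, the
first is close to `1` and the second close to `0`. -/
def concatCurve (τ : ℝ) (γ₁ γ₂ : ℝ → Pt n lam) (t : ℝ) : Pt n lam :=
  γ₁ (brake τ t) + γ₂ (1 - brake τ (1 - t)) - γ₂ 0

def concatVelocity (τ : ℝ) (γ₁' γ₂' : ℝ → Pt n lam) (t : ℝ) : Pt n lam :=
  brakeSpeed τ t • γ₁' (brake τ t) + brakeSpeed τ (1 - t) • γ₂' (1 - brake τ (1 - t))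

lemma one_sub_brake_one_sub_mem_Icc (hτ : 0 < τ) (hτ' : τ ≤ 1 / 2) {t : ℝ}
    (ht : t ∈ Icc (0 : ℝ) 1) : 1 - brake τ (1 - t) ∈ Icc (0 : ℝ) 1 := by
  obtain ⟨h₀, h₁⟩ := brake_mem_Icc hτ hτ' (t := 1 - t) ⟨by linarith [ht.2], by linarith [ht.1]⟩
  exact ⟨by linarith, by linarith⟩

lemma hasDerivAt_concatCurve (hτ : 0 < τ) (hτ' : τ ≤ 1 / 2) {γ₁ γ₁' γ₂ γ₂' : ℝ → Pt n lam}
    (h₁ : ∀ t ∈ Icc (0 : ℝ) 1, HasDerivAt γ₁ (γ₁' t) t)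
    (h₂ : ∀ t ∈ Icc (0 : ℝ) 1, HasDerivAt γ₂ (γ₂' t) t) {t : ℝ} (ht : t ∈ Icc (0 : ℝ) 1) :
    HasDerivAt (concatCurve τ γ₁ γ₂) (concatVelocity τ γ₁' γ₂' t) t := by
  have hrev : HasDerivAt (fun t => 1 - brake τ (1 - t)) (brakeSpeed τ (1 - t)) t := by
    simpa using ((hasDerivAt_brake τ (1 - t)).comp t ((hasDerivAt_id t).const_sub 1)).const_sub 1
  exact (((h₁ _ (brake_mem_Icc hτ hτ' ht)).scomp t (hasDerivAt_brake τ t)).add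
    ((h₂ _ (one_sub_brake_one_sub_mem_Icc hτ hτ' ht)).scomp t hrev)).sub_const _

lemma continuousOn_concatVelocity (hτ : 0 < τ) (hτ' : τ ≤ 1 / 2) {γ₁' γ₂' : ℝ → Pt n lam}
    (h₁ : ContinuousOn γ₁' (Icc 0 1)) (h₂ : ContinuousOn γ₂' (Icc 0 1)) :
    ContinuousOn (concatVelocity τ γ₁' γ₂') (Icc 0 1) := by
  have hb : Continuous (brake τ) := continuous_iff_continuousAt.2 fun t =>
    (hasDerivAt_brake τ t).continuousAt
  refine ((continuous_brakeSpeed τ).continuousOn.smul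
    (h₁.comp hb.continuousOn fun t ht => brake_mem_Icc hτ hτ' ht)).add
    (((continuous_brakeSpeed τ).comp (continuous_const.sub continuous_id)).continuousOn.smul
      (h₂.comp (by fun_prop) fun t ht => one_sub_brake_one_sub_mem_Icc hτ hτ' ht))

lemma concat_of_le_half_sub (hτ : 0 < τ) {γ₁ γ₁' γ₂ γ₂' : ℝ → Pt n lam} {t : ℝ}
    (ht : t ≤ 1 / 2 - τ) : concatCurve τ γ₁ γ₂ t = γ₁ (brake τ t) ∧
      concatVelocity τ γ₁' γ₂' t = (2 / (1 + τ)) • γ₁' (brake τ t) := by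
  have h₁ : brake τ (1 - t) = 1 := brake_of_le hτ (by linarith)
  have h₂ : brakeSpeed τ (1 - t) = 0 := brakeSpeed_of_le hτ (by linarith)
  simp [concatCurve, concatVelocity, h₁, h₂, brakeSpeed_of_le_half hτ.le (by linarith : t ≤ 1 / 2)]

lemma concat_of_half_add_le (hτ : 0 < τ) {γ₁ γ₁' γ₂ γ₂' : ℝ → Pt n lam} (hjoin : γ₁ 1 = γ₂ 0)
    {t : ℝ} (ht : 1 / 2 + τ ≤ t) :
    concatCurve τ γ₁ γ₂ t = γ₂ (1 - brake τ (1 - t)) ∧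
      concatVelocity τ γ₁' γ₂' t = (2 / (1 + τ)) • γ₂' (1 - brake τ (1 - t)) := by
  have h₁ : brake τ t = 1 := brake_of_le hτ ht
  have h₂ : brakeSpeed τ t = 0 := brakeSpeed_of_le hτ ht
  simp [concatCurve, concatVelocity, h₁, h₂, hjoin,
    brakeSpeed_of_le_half hτ.le (by linarith : 1 - t ≤ 1 / 2)]

lemma Timelike.exists_mem_timelikeBundle_near_junction (hζ : 0 < ζ)
    {γ₁ γ₁' γ₂ γ₂' : ℝ → Pt n lam} (h₁ : Timelike ζ ε γ₁ γ₁') (h₂ : Timelike ζ ε γ₂ γ₂')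
    (hjoin : γ₁ 1 = γ₂ 0) :
    ∃ ρ > 0, ∀ a ∈ Icc (0 : ℝ) 1, ∀ b ∈ Icc (0 : ℝ) 1, 1 - a < ρ → b < ρ →
      ∀ c₁ c₂ : ℝ, 0 ≤ c₁ → 0 ≤ c₂ → 0 < c₁ + c₂ →
      (γ₁ a + γ₂ b - γ₂ 0, c₁ • γ₁' a + c₂ • γ₂' b) ∈ timelikeBundle ζ ε n lam := by
  have h0 : (0 : ℝ) ∈ Icc (0 : ℝ) 1 := ⟨le_rfl, zero_le_one⟩
  have h1 : (1 : ℝ) ∈ Icc (0 : ℝ) 1 := ⟨zero_le_one, le_rfl⟩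
  obtain ⟨δ, hδ, hblend⟩ := exists_blend_mem_timelikeBundle hζ
    ((timelike_iff.1 h₁).2.2 1 h1) (hjoin ▸ (timelike_iff.1 h₂).2.2 0 h0)
  obtain ⟨ρ₁, hρ₁, hnear₁⟩ :=
    Metric.continuousWithinAt_iff.1 (Timelike.continuousOn h₁ 1 h1) (δ / 2) (by positivity)
  obtain ⟨ρ₂, hρ₂, hnear₂⟩ :=
    Metric.continuousWithinAt_iff.1 (Timelike.continuousOn h₂ 0 h0) (δ / 2) (by positivity)
  refine ⟨min ρ₁ ρ₂, lt_min hρ₁ hρ₂, fun a ha b hb hρa hρb c₁ c₂ hc₁ hc₂ hc => ?_⟩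
  have hna := hnear₁ ha (by
    rw [Real.dist_eq, abs_of_nonpos (by linarith [ha.2])]
    linarith [min_le_left ρ₁ ρ₂])
  have hnb := hnear₂ hb (by
    rw [Real.dist_eq, sub_zero, abs_of_nonneg hb.1]
    linarith [min_le_right ρ₁ ρ₂])
  rw [Prod.dist_eq, max_lt_iff] at hna hnb
  refine hblend _ _ _ _ _ ?_ (by linarith [hna.2]) (by linarith [hnb.2]) hc₁ hc₂ hc
  calc dist (γ₁ a + γ₂ b - γ₂ 0) (γ₁ 1)
      = ‖(γ₁ a - γ₁ 1) + (γ₂ b - γ₂ 0)‖ := by rw [dist_eq_norm]; congr 1; abel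
    _ ≤ dist (γ₁ a) (γ₁ 1) + dist (γ₂ b) (γ₂ 0) := by
        rw [dist_eq_norm, dist_eq_norm]; exact norm_add_le _ _
    _ < δ := by linarith [hna.1, hnb.1]

lemma Timelike.concat (hζ : 0 < ζ) {γ₁ γ₁' γ₂ γ₂' : ℝ → Pt n lam}
    (h₁ : Timelike ζ ε γ₁ γ₁') (h₂ : Timelike ζ ε γ₂ γ₂') (hjoin : γ₁ 1 = γ₂ 0) :
    ∃ τ ∈ Ioc (0 : ℝ) (1 / 2),
      Timelike ζ ε (concatCurve τ γ₁ γ₂) (concatVelocity τ γ₁' γ₂') := by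
  obtain ⟨hd₁, hc₁, hB₁⟩ := timelike_iff.1 h₁
  obtain ⟨hd₂, hc₂, hB₂⟩ := timelike_iff.1 h₂
  obtain ⟨ρ, hρ, hjunction⟩ :=
    Timelike.exists_mem_timelikeBundle_near_junction hζ h₁ h₂ hjoin
  set τ := min (ρ / 4) (1 / 2)
  have hτ : 0 < τ := by positivity
  have hτ' : τ ≤ 1 / 2 := min_le_right _ _
  have hτρ : 3 * τ < ρ := by linarith [min_le_left (ρ / 4) (1 / 2)]
  refine ⟨τ, ⟨hτ, hτ'⟩, timelike_iff.2 ⟨fun t ht => hasDerivAt_concatCurve hτ hτ' hd₁ hd₂ ht,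
    continuousOn_concatVelocity hτ hτ' hc₁ hc₂, fun t ht => ?_⟩⟩
  have hspeed : 0 < 2 / (1 + τ) := by positivity
  rcases le_or_gt t (1 / 2 - τ) with hearly | hearly
  · obtain ⟨hΓ, hΓ'⟩ := concat_of_le_half_sub (γ₂ := γ₂) (γ₁' := γ₁') (γ₂' := γ₂') hτ hearly
    rw [hΓ, hΓ']
    exact smul_mem_timelikeBundle hspeed (hB₁ _ (brake_mem_Icc hτ hτ' ht))
  rcases le_or_gt (1 / 2 + τ) t with hlate | hlate
  · obtain ⟨hΓ, hΓ'⟩ := concat_of_half_add_le (γ₁' := γ₁') (γ₂' := γ₂') hτ hjoin hlate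
    rw [hΓ, hΓ']
    exact smul_mem_timelikeBundle hspeed (hB₂ _ (one_sub_brake_one_sub_mem_Icc hτ hτ' ht))
  refine hjunction _ (brake_mem_Icc hτ hτ' ht) _ (one_sub_brake_one_sub_mem_Icc hτ hτ' ht)
    (by linarith [one_sub_brake_le hτ hearly.le])
    (by linarith [one_sub_brake_le hτ (t := 1 - t) (by linarith)])
    _ _ (brakeSpeed_nonneg hτ _) (brakeSpeed_nonneg hτ _) ?_
  rcases le_total t (1 / 2) with hhalf | hhalf
  · linarith [brakeSpeed_of_le_half hτ.le hhalf, brakeSpeed_nonneg hτ (1 - t)]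
  · linarith [brakeSpeed_of_le_half hτ.le (by linarith : 1 - t ≤ 1 / 2), brakeSpeed_nonneg hτ t]

lemma chron_trans (hζ : 0 < ζ) {x y z : Pt n lam} (hxy : chron ζ ε x y) (hyz : chron ζ ε y z) :
    chron ζ ε x z := by
  obtain ⟨γ₁, γ₁', h₁, hx, hy₁⟩ := hxy
  obtain ⟨γ₂, γ₂', h₂, hy₂, hz⟩ := hyz
  obtain ⟨τ, ⟨hτ, hτ'⟩, hconcat⟩ := Timelike.concat hζ h₁ h₂ (hy₁.trans hy₂.symm)
  refine ⟨_, _, hconcat, ?_, ?_⟩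
  · rw [(concat_of_le_half_sub (γ₁' := γ₁') (γ₂' := γ₂') hτ (by linarith)).1,
      brake_of_le_half hτ.le (by norm_num), mul_zero, hx]
  · rw [(concat_of_half_add_le (γ₁' := γ₁') (γ₂' := γ₂') hτ (hy₁.trans hy₂.symm)
      (by linarith)).1, sub_self, brake_of_le_half hτ.le (by norm_num), mul_zero, sub_zero, hz]

end MorseChronology

open MorseChronology

theorem stmt18_general (n lam : ℕ)
    (ζ ε : ℝ) (hζ : 1 < ζ)
    (q : Pt n lam) :
    ((∃ y ∈ downSet ζ ε (Iplus ζ ε q), y ∉ Iminus ζ ε q) →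
      ∃ z ∈ downSet ζ ε (Iplus ζ ε q), z ∉ closure (Iminus ζ ε q)) ∧
    ((∃ y ∈ upSet ζ ε (Iminus ζ ε q), y ∉ Iplus ζ ε q) →
      ∃ z ∈ upSet ζ ε (Iminus ζ ε q), z ∉ closure (Iplus ζ ε q)) := by
  have hζ₀ : 0 < ζ := zero_lt_one.trans hζ
  constructor
  · rintro ⟨y, hyD, hyq⟩
    have hy : y ∈ NN n lam ε := (interior_subset hyD).1
    exact exists_mem_notMem_closure (r := chron ζ ε) (fun h₁ h₂ => chron_trans hζ₀ h₁ h₂)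
      isOpen_interior hyD (isOpen_setOf_chron y) (mem_closure_setOf_chron hζ hy)
      (fun w hw => hw.2) fun h => hyq ⟨hy, h⟩
  · rintro ⟨y, hyU, hyq⟩
    have hy : y ∈ NN n lam ε := (interior_subset hyU).1
    exact exists_mem_notMem_closure (r := fun a b => chron ζ ε b a)
      (fun h₁ h₂ => chron_trans hζ₀ h₂ h₁) isOpen_interior hyU (isOpen_setOf_chron_left y)
      (mem_closure_setOf_chron_left hζ hy) (fun w hw => hw.2) fun h => hyq ⟨hy, h⟩

/-- for any index `0 ≤ λ ≤ n` and any `q ∈ N`: if some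
`y ∈ ↓I⁺(q)` has `y ∉ I⁻(q)`, then some `z ∈ ↓I⁺(q)` avoids the closure (in `N`)
of `I⁻(q)`; dually for `↑I⁻(q)` and `I⁺(q)`. -/
theorem stmt18 (n lam : ℕ) (hn : 2 ≤ n) (hlam : lam ≤ n)
    (ζ ε : ℝ) (hζ : 1 < ζ) (hε : 0 < ε)
    (q : Pt n lam) (hq : q ∈ NN n lam ε) :
    ((∃ y ∈ downSet ζ ε (Iplus ζ ε q), y ∉ Iminus ζ ε q) →
      ∃ z ∈ downSet ζ ε (Iplus ζ ε q), z ∉ closure (Iminus ζ ε q)) ∧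
    ((∃ y ∈ upSet ζ ε (Iminus ζ ε q), y ∉ Iplus ζ ε q) →
      ∃ z ∈ upSet ζ ε (Iminus ζ ε q), z ∉ closure (Iplus ζ ε q)) :=
  stmt18_general n lam ζ ε hζ q
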